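/- arXiv:1810.12425 — 2 statements merged into one kernel-verified Lean document; each statement's English description precedes it below -/
import Mathlib

section
/- Let P₀₀, P₁₀, P₁₁, P₀₁ be the vertices (in order) of a strictly convex quadrilateral in ℝ² with positive orientation. Then the bilinear map G(ξ₁,ξ₂) = (1−ξ₁)(1−ξ₂)P₀₀ + ξ₁(1−ξ₂)P₁₀ + (1−ξ₁)ξ₂P₀₁ + ξ₁ξ₂P₁₁ has det(∇G)(ξ₁,ξ₂) > 0 for all (ξ₁,ξ₂) ∈ [0,1]². -/
/-!
The partial derivative `∂₁G` is affine in `ξ₂` alone and `∂₂G` is affine in `ξ₁` alone, so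
`det ∇G = cross2 ∂₁G ∂₂G` is bilinear in `ξ`: it is the bilinear interpolation of its values at
the corners of `[0,1]²`. At the corners these values are the four cross products of the
convexity hypotheses, and a bilinear interpolation of positive numbers with weights in `[0,1]`
is positive.
-/

def cross2 (a b : ℝ × ℝ) : ℝ := a.1 * b.2 - a.2 * b.1

section BilinearInterpolant

variable {E : Type*} [NormedAddCommGroup E] [NormedSpace ℝ E]

def bilinearInterpolant (P₀₀ P₁₀ P₁₁ P₀₁ : E) (ξ : ℝ × ℝ) : E :=
  ((1 - ξ.1) * (1 - ξ.2)) • P₀₀ + (ξ.1 * (1 - ξ.2)) • P₁₀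
    + ((1 - ξ.1) * ξ.2) • P₀₁ + (ξ.1 * ξ.2) • P₁₁

theorem hasFDerivAt_bilinearInterpolant (P₀₀ P₁₀ P₁₁ P₀₁ : E) (ξ : ℝ × ℝ) :
    HasFDerivAt (bilinearInterpolant P₀₀ P₁₀ P₁₁ P₀₁)
      ((ContinuousLinearMap.fst ℝ ℝ ℝ).smulRight
          ((1 - ξ.2) • (P₁₀ - P₀₀) + ξ.2 • (P₁₁ - P₀₁))
        + (ContinuousLinearMap.snd ℝ ℝ ℝ).smulRight
          ((1 - ξ.1) • (P₀₁ - P₀₀) + ξ.1 • (P₁₁ - P₁₀))) ξ := by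
  have h₁ : HasFDerivAt (fun ξ : ℝ × ℝ => ξ.1) (ContinuousLinearMap.fst ℝ ℝ ℝ) ξ :=
    hasFDerivAt_fst
  have h₂ : HasFDerivAt (fun ξ : ℝ × ℝ => ξ.2) (ContinuousLinearMap.snd ℝ ℝ ℝ) ξ :=
    hasFDerivAt_snd
  refine (((((h₁.const_sub 1).mul (h₂.const_sub 1)).smul_const P₀₀).add
    ((h₁.mul (h₂.const_sub 1)).smul_const P₁₀)).add
    (((h₁.const_sub 1).mul h₂).smul_const P₀₁) |>.add ((h₁.mul h₂).smul_const P₁₁)).congr_fderiv ?_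
  ext <;> simp <;> module

end BilinearInterpolant

theorem det_fst_smulRight_add_snd_smulRight (u v : ℝ × ℝ) :
    LinearMap.det (((ContinuousLinearMap.fst ℝ ℝ ℝ).smulRight u
      + (ContinuousLinearMap.snd ℝ ℝ ℝ).smulRight v : (ℝ × ℝ) →L[ℝ] (ℝ × ℝ)) :
        (ℝ × ℝ) →ₗ[ℝ] (ℝ × ℝ)) = cross2 u v := by
  rw [← LinearMap.det_toMatrix (Module.Basis.finTwoProd ℝ), Matrix.det_fin_two, cross2]
  simp [LinearMap.toMatrix_apply, mul_comm]

theorem cross2_partials_eq (P₀₀ P₁₀ P₁₁ P₀₁ : ℝ × ℝ) (s t : ℝ) :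
    cross2 ((1 - t) • (P₁₀ - P₀₀) + t • (P₁₁ - P₀₁)) ((1 - s) • (P₀₁ - P₀₀) + s • (P₁₁ - P₁₀))
      = (1 - t) * ((1 - s) * cross2 (P₁₀ - P₀₀) (P₀₁ - P₀₀) + s * cross2 (P₁₁ - P₁₀) (P₀₀ - P₁₀))
        + t * ((1 - s) * cross2 (P₀₀ - P₀₁) (P₁₁ - P₀₁) + s * cross2 (P₀₁ - P₁₁) (P₁₀ - P₁₁)) := by
  simp only [cross2, Prod.fst_add, Prod.snd_add, Prod.smul_fst, Prod.smul_snd, Prod.fst_sub,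
    Prod.snd_sub, smul_eq_mul]
  ring

theorem one_sub_mul_add_mul_pos {a A B : ℝ} (ha₀ : 0 ≤ a) (ha₁ : a ≤ 1) (hA : 0 < A)
    (hB : 0 < B) : 0 < (1 - a) * A + a * B :=
  convex_Ioi (0 : ℝ) hA hB (sub_nonneg.2 ha₁) ha₀ (sub_add_cancel 1 a)

/-- The bilinear interpolant of a strictly convex, positively oriented
quadrilateral has positive Jacobian determinant on `[0,1]²`. -/
theorem bilinear_interpolant_jacobian_pos
    (P₀₀ P₁₀ P₁₁ P₀₁ : ℝ × ℝ)
    (h₀₀ : 0 < cross2 (P₁₀ - P₀₀) (P₀₁ - P₀₀))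
    (h₁₀ : 0 < cross2 (P₁₁ - P₁₀) (P₀₀ - P₁₀))
    (h₁₁ : 0 < cross2 (P₀₁ - P₁₁) (P₁₀ - P₁₁))
    (h₀₁ : 0 < cross2 (P₀₀ - P₀₁) (P₁₁ - P₀₁))
    (G : ℝ × ℝ → ℝ × ℝ)
    (hG : ∀ ξ : ℝ × ℝ, G ξ =
      ((1 - ξ.1) * (1 - ξ.2)) • P₀₀ + (ξ.1 * (1 - ξ.2)) • P₁₀
      + ((1 - ξ.1) * ξ.2) • P₀₁ + (ξ.1 * ξ.2) • P₁₁) :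
    ∀ ξ ∈ Set.Icc ((0 : ℝ), (0 : ℝ)) (1, 1),
      0 < LinearMap.det ((fderiv ℝ G ξ : (ℝ × ℝ) →L[ℝ] (ℝ × ℝ)) :
        (ℝ × ℝ) →ₗ[ℝ] (ℝ × ℝ)) := by
  rintro ξ ⟨⟨hξ₁, hξ₂⟩, ⟨hξ₁', hξ₂'⟩⟩
  have hG' : G = bilinearInterpolant P₀₀ P₁₀ P₁₁ P₀₁ := funext hG
  rw [hG', (hasFDerivAt_bilinearInterpolant P₀₀ P₁₀ P₁₁ P₀₁ ξ).fderiv,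
    det_fst_smulRight_add_snd_smulRight, cross2_partials_eq]
  exact one_sub_mul_add_mul_pos hξ₂ hξ₂'
    (one_sub_mul_add_mul_pos hξ₁ hξ₁' h₀₀ h₁₀) (one_sub_mul_add_mul_pos hξ₁ hξ₁' h₀₁ h₁₁)
end

section
/- The Jacobian determinant of the bilinear interpolation G of four points in ℝ² is an affine (degree ≤ 1 in each variable jointly linear) function of (ξ₁,ξ₂); hence it is positive on [0,1]² if and only if it is positive at the four corners. -/
/-!
Both partial derivatives of `G` share the mixed coefficient `d = P₀₀ - P₁₀ - P₀₁ + P₁₁`: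
`∂₁G = (P₁₀ - P₀₀) + ξ₂ d` and `∂₂G = (P₀₁ - P₀₀) + ξ₁ d`. Hence the `ξ₁ξ₂`-coefficient of
`J = ∂₁G × ∂₂G` is `d × d = 0`, and `J` is affine. An affine function agrees with the bilinear
interpolation of its corner values, which on the unit square is a convex combination of them,
so positivity at the corners gives positivity on the whole square.
-/

open Set

section BilinearInterp

variable {E : Type*}

def bilinearInterp [AddCommGroup E] [Module ℝ E] (P₀₀ P₁₀ P₀₁ P₁₁ : E) (ξ : ℝ × ℝ) : E :=
  ((1 - ξ.1) * (1 - ξ.2)) • P₀₀ + (ξ.1 * (1 - ξ.2)) • P₁₀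
    + ((1 - ξ.1) * ξ.2) • P₀₁ + (ξ.1 * ξ.2) • P₁₁

theorem bilinearInterp_eq_lineMap [AddCommGroup E] [Module ℝ E] (P₀₀ P₁₀ P₀₁ P₁₁ : E)
    (ξ : ℝ × ℝ) :
    bilinearInterp P₀₀ P₁₀ P₀₁ P₁₁ ξ =
      AffineMap.lineMap (AffineMap.lineMap P₀₀ P₁₀ ξ.1) (AffineMap.lineMap P₀₁ P₁₁ ξ.1) ξ.2 := by
  simp only [bilinearInterp, AffineMap.lineMap_apply_module]
  module

theorem Convex.bilinearInterp_mem [AddCommGroup E] [Module ℝ E] {s : Set E} (hs : Convex ℝ s)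
    {P₀₀ P₁₀ P₀₁ P₁₁ : E} (h₀₀ : P₀₀ ∈ s) (h₁₀ : P₁₀ ∈ s) (h₀₁ : P₀₁ ∈ s) (h₁₁ : P₁₁ ∈ s)
    {ξ : ℝ × ℝ} (hξ : ξ ∈ Icc 0 1) : bilinearInterp P₀₀ P₁₀ P₀₁ P₁₁ ξ ∈ s := by
  obtain ⟨⟨hx₀, hy₀⟩, hx₁, hy₁⟩ := hξ
  rw [bilinearInterp_eq_lineMap]
  exact hs.lineMap_mem (hs.lineMap_mem h₀₀ h₁₀ ⟨hx₀, hx₁⟩) (hs.lineMap_mem h₀₁ h₁₁ ⟨hx₀, hx₁⟩)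
    ⟨hy₀, hy₁⟩

theorem hasFDerivAt_bilinearInterp [NormedAddCommGroup E] [NormedSpace ℝ E]
    (P₀₀ P₁₀ P₀₁ P₁₁ : E) (ξ : ℝ × ℝ) :
    HasFDerivAt (bilinearInterp P₀₀ P₁₀ P₀₁ P₁₁)
      ((ContinuousLinearMap.fst ℝ ℝ ℝ).smulRight ((1 - ξ.2) • (P₁₀ - P₀₀) + ξ.2 • (P₁₁ - P₀₁)) +
        (ContinuousLinearMap.snd ℝ ℝ ℝ).smulRight ((1 - ξ.1) • (P₀₁ - P₀₀) + ξ.1 • (P₁₁ - P₁₀)))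
      ξ := by
  have hx : HasFDerivAt (fun p : ℝ × ℝ ↦ p.1) (ContinuousLinearMap.fst ℝ ℝ ℝ) ξ :=
    hasFDerivAt_fst
  have hy : HasFDerivAt (fun p : ℝ × ℝ ↦ p.2) (ContinuousLinearMap.snd ℝ ℝ ℝ) ξ :=
    hasFDerivAt_snd
  have hx' := (hasFDerivAt_const (1 : ℝ) ξ).sub hx
  have hy' := (hasFDerivAt_const (1 : ℝ) ξ).sub hy
  refine ((((hx'.mul hy').smul_const P₀₀).add ((hx.mul hy').smul_const P₁₀)).add
    ((hx'.mul hy).smul_const P₀₁) |>.add ((hx.mul hy).smul_const P₁₁)).congr_fderiv ?_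
  ext <;>
  simp only [Pi.sub_apply, zero_sub, smul_neg, ContinuousLinearMap.add_comp, add_apply,
    ContinuousLinearMap.comp_apply, ContinuousLinearMap.inl_apply, ContinuousLinearMap.inr_apply,
    ContinuousLinearMap.smulRight_apply, neg_apply, smul_apply, ContinuousLinearMap.coe_fst',
    ContinuousLinearMap.coe_snd', smul_eq_mul, mul_zero, mul_one, neg_zero] <;>
  module

end BilinearInterp

def cross (u v : ℝ × ℝ) : ℝ := u.1 * v.2 - u.2 * v.1

theorem LinearMap.det_eq_cross (f : (ℝ × ℝ) →ₗ[ℝ] ℝ × ℝ) :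
    LinearMap.det f = cross (f (1, 0)) (f (0, 1)) := by
  rw [← LinearMap.det_toMatrix (Module.Basis.finTwoProd ℝ), Matrix.det_fin_two]
  simp only [LinearMap.toMatrix_apply, Module.Basis.finTwoProd_zero, Module.Basis.finTwoProd_one,
    Module.Basis.coe_finTwoProd_repr, Matrix.cons_val_zero, Matrix.cons_val_one,
    Matrix.cons_val_fin_one, cross]
  ring

theorem det_fderiv_bilinearInterp (P₀₀ P₁₀ P₀₁ P₁₁ : ℝ × ℝ) (ξ : ℝ × ℝ) :
    LinearMap.det (fderiv ℝ (bilinearInterp P₀₀ P₁₀ P₀₁ P₁₁) ξ : (ℝ × ℝ) →ₗ[ℝ] ℝ × ℝ) =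
      cross (P₁₀ - P₀₀) (P₀₁ - P₀₀)
        + cross (P₁₀ - P₀₀) (P₀₀ - P₁₀ - P₀₁ + P₁₁) * ξ.1
        + cross (P₀₀ - P₁₀ - P₀₁ + P₁₁) (P₀₁ - P₀₀) * ξ.2 := by
  rw [(hasFDerivAt_bilinearInterp P₀₀ P₁₀ P₀₁ P₁₁ ξ).fderiv, LinearMap.det_eq_cross]
  simp only [ContinuousLinearMap.toLinearMap_add, ContinuousLinearMap.coe_smulRight,
    ContinuousLinearMap.coe_fst, ContinuousLinearMap.coe_snd, LinearMap.add_apply,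
    LinearMap.coe_smulRight, LinearMap.fst_apply, LinearMap.snd_apply, one_smul, zero_smul,
    add_zero, zero_add, cross, Prod.fst_add, Prod.snd_add, Prod.smul_fst, Prod.smul_snd,
    Prod.fst_sub, Prod.snd_sub, smul_eq_mul]
  ring

theorem affine_eq_bilinearInterp {f : ℝ × ℝ → ℝ} {a b c : ℝ}
    (hf : ∀ ξ, f ξ = a + b * ξ.1 + c * ξ.2) (ξ : ℝ × ℝ) :
    f ξ = bilinearInterp (f (0, 0)) (f (1, 0)) (f (0, 1)) (f (1, 1)) ξ := by
  simp only [bilinearInterp, hf, smul_eq_mul]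
  ring

theorem forall_mem_unitSquare_pos_iff_of_affine {f : ℝ × ℝ → ℝ} {a b c : ℝ}
    (hf : ∀ ξ, f ξ = a + b * ξ.1 + c * ξ.2) :
    (∀ ξ ∈ Icc ((0 : ℝ), (0 : ℝ)) (1, 1), 0 < f ξ) ↔
      (0 < f (0, 0) ∧ 0 < f (1, 0) ∧ 0 < f (0, 1) ∧ 0 < f (1, 1)) := by
  refine ⟨fun h ↦ ⟨h _ ?_, h _ ?_, h _ ?_, h _ ?_⟩, fun ⟨h₀₀, h₁₀, h₀₁, h₁₁⟩ ξ hξ ↦ ?_⟩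
  any_goals simp [Prod.le_def]
  rw [affine_eq_bilinearInterp hf ξ]
  exact (convex_Ioi (0 : ℝ)).bilinearInterp_mem h₀₀ h₁₀ h₀₁ h₁₁ hξ

/-- The Jacobian determinant of the bilinear interpolation of four points in
`ℝ²` is an affine function of `(ξ₁, ξ₂)`; hence it is positive on `[0,1]²` iff
it is positive at the four corners. -/
theorem bilinear_jacobian_affine_and_corner_criterion
    (P₀₀ P₁₀ P₀₁ P₁₁ : ℝ × ℝ)
    (G : ℝ × ℝ → ℝ × ℝ)
    (hG : ∀ ξ : ℝ × ℝ, G ξ =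
      ((1 - ξ.1) * (1 - ξ.2)) • P₀₀ + (ξ.1 * (1 - ξ.2)) • P₁₀
      + ((1 - ξ.1) * ξ.2) • P₀₁ + (ξ.1 * ξ.2) • P₁₁)
    (J : ℝ × ℝ → ℝ)
    (hJ : ∀ ξ : ℝ × ℝ, J ξ = LinearMap.det
      ((fderiv ℝ G ξ : (ℝ × ℝ) →L[ℝ] (ℝ × ℝ)) : (ℝ × ℝ) →ₗ[ℝ] (ℝ × ℝ))) :
    (∃ a b c : ℝ, ∀ ξ : ℝ × ℝ, J ξ = a + b * ξ.1 + c * ξ.2) ∧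
    ((∀ ξ ∈ Set.Icc ((0 : ℝ), (0 : ℝ)) (1, 1), 0 < J ξ) ↔
      (0 < J (0, 0) ∧ 0 < J (1, 0) ∧ 0 < J (0, 1) ∧ 0 < J (1, 1))) := by
  have hG' : G = bilinearInterp P₀₀ P₁₀ P₀₁ P₁₁ := funext hG
  have hJ_affine : ∀ ξ : ℝ × ℝ, J ξ = cross (P₁₀ - P₀₀) (P₀₁ - P₀₀)
      + cross (P₁₀ - P₀₀) (P₀₀ - P₁₀ - P₀₁ + P₁₁) * ξ.1
      + cross (P₀₀ - P₁₀ - P₀₁ + P₁₁) (P₀₁ - P₀₀) * ξ.2 := fun ξ ↦ by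
    rw [hJ, hG', det_fderiv_bilinearInterp]
  exact ⟨⟨_, _, _, hJ_affine⟩, forall_mem_unitSquare_pos_iff_of_affine hJ_affine⟩
end
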